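/- The commutator width of the wreath product Z ≀ Z^d is exactly ⌈d/2⌉: every element of the derived subgroup is a product of ⌈d/2⌉ commutators, and there is an element of the derived subgroup that is not a product of fewer than ⌈d/2⌉ commutators (for d ≥ 1). -/

import Mathlib

/-!
In `R ⋊ B` the commutator of `(f, b)` and `(g, c)` is `((1 - c) f + (b - 1) g, 1)`. So the derived
subgroup of `ℤ ≀ ℤ^d` lies in the base `ℤ[ℤ^d]`, inside the augmentation ideal, which is generated by
the `zᵢ - 1` for the standard generators `zᵢ` of `ℤ^d`; pairing them off writes `∑ cᵢ (zᵢ - 1)` as the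
product of the `⌈d/2⌉` commutators `⁅(-c₂ⱼ₊₁, z₂ⱼ), (c₂ⱼ, z₂ⱼ₊₁)⁆`.

Conversely, let `∑ (zᵢ - 1)` be a product of commutators `⁅gⱼ, hⱼ⁆`, `j < m`, and let `K ≤ ℤ^d` be
generated by the `2m` elements `gⱼ.right`, `hⱼ.right`. The ring map `ℤ[ℤ^d] → ℤ[ℤ^d ⧸ K]` kills the
coordinate of every `⁅gⱼ, hⱼ⁆`, hence kills `∑ (zᵢ - 1)`; comparing coefficients of `1` forces every
`zᵢ` into `K`. So `ℤ^d` is generated by `2m` elements, and `d ≤ 2m`.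
-/

open MonoidAlgebra
open scoped commutatorElement

/-- `AddAut A` as multiplicative automorphisms of `Multiplicative A`. -/
def addAutToMulAut (A : Type*) [AddGroup A] : Multiplicative (AddAut A) →* MulAut (Multiplicative A) where
  toFun e := AddEquiv.toMultiplicative (Multiplicative.toAdd e)
  map_one' := rfl
  map_mul' _ _ := rfl

/-- The action of `B` on (the additive group of) a commutative ring `R`
through a homomorphism `ψ : B →* Rˣ`, by multiplication. -/
def ringMulAction {R : Type*} [CommRing R] {B : Type*} [CommGroup B] (ψ : B →* Rˣ) :
    B →* MulAut (Multiplicative R) :=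
  (addAutToMulAut R).comp (AddAut.mulLeft.comp ψ)

/-- The semidirect product `R ⋊ B` where `B` acts on the additive group of the
commutative ring `R` by multiplication via `ψ : B →* Rˣ`. -/
abbrev RingSemidirect (R : Type*) [CommRing R] {B : Type*} [CommGroup B] (ψ : B →* Rˣ) :=
  SemidirectProduct (Multiplicative R) B (ringMulAction ψ)

/-- The element `(f, b)` of `R ⋊ B`. -/
abbrev RingSemidirect.mk {R : Type*} [CommRing R] {B : Type*} [CommGroup B] (ψ : B →* Rˣ)
    (f : R) (b : B) : RingSemidirect R ψ :=
  ⟨Multiplicative.ofAdd f, b⟩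

/-- The canonical homomorphism `B →* (ℤ[B])ˣ`, sending `b` to the monomial `Z^b`. -/
noncomputable abbrev zUnits (B : Type*) [CommGroup B] : B →* (MonoidAlgebra ℤ B)ˣ :=
  (MonoidAlgebra.of ℤ B).toHomUnits

/-- The wreath product `ℤ ≀ B`, realized as `ℤ[B] ⋊ B` with `B` acting by multiplication
by monomials. -/
abbrev ZWreath (B : Type*) [CommGroup B] := RingSemidirect (MonoidAlgebra ℤ B) (zUnits B)

/-- The element `(f, b)` of `ℤ ≀ B = ℤ[B] ⋊ B`. -/
noncomputable abbrev ZWreath.mk {B : Type*} [CommGroup B] (f : MonoidAlgebra ℤ B) (b : B) : ZWreath B :=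
  RingSemidirect.mk (zUnits B) f b

@[simp]
theorem ringMulAction_apply {R : Type*} [CommRing R] {B : Type*} [CommGroup B] (ψ : B →* Rˣ)
    (b : B) (u : Multiplicative R) : ringMulAction ψ b u = .ofAdd (ψ b * u.toAdd) :=
  rfl

namespace RingSemidirect

variable {R : Type*} [CommRing R] {B : Type*} [CommGroup B] (ψ : B →* Rˣ)

theorem commutator_eq (x y : RingSemidirect R ψ) :
    ⁅x, y⁆ = mk ψ ((1 - ψ y.right) * x.left.toAdd + (ψ x.right - 1) * y.left.toAdd) 1 := by
  ext
  · simp only [commutatorElement_def, SemidirectProduct.mul_left, SemidirectProduct.inv_left,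
      SemidirectProduct.mul_right, SemidirectProduct.inv_right, ringMulAction_apply, toAdd_mul,
      toAdd_inv, toAdd_ofAdd]
    simp only [map_mul, map_inv, Units.val_mul]
    linear_combination
      (-(x.left.toAdd * ψ y.right) - y.left.toAdd * ψ y.right * ↑(ψ y.right)⁻¹) *
          (ψ x.right).mul_inv - y.left.toAdd * (ψ y.right).mul_inv
  · simp [commutatorElement_def, mul_comm x.right]

theorem commutator_mk (f g : R) (b c : B) :
    ⁅mk ψ f b, mk ψ g c⁆ = mk ψ ((1 - ψ c) * f + (ψ b - 1) * g) 1 :=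
  commutator_eq ψ _ _

theorem mk_add (f g : R) : mk ψ (f + g) 1 = mk ψ f 1 * mk ψ g 1 := by
  ext <;> simp [-SemidirectProduct.mk_eq_inl_mul_inr]

def baseSubgroup (I : Ideal R) : Subgroup (RingSemidirect R ψ) :=
  (AddSubgroup.toSubgroup I.toAddSubgroup).map SemidirectProduct.inl

variable {ψ}

theorem mem_baseSubgroup {I : Ideal R} {x : RingSemidirect R ψ} :
    x ∈ baseSubgroup ψ I ↔ ∃ f ∈ I, mk ψ f 1 = x := by
  simp [baseSubgroup]

theorem commutator_mem_baseSubgroup {I : Ideal R} {x y : RingSemidirect R ψ}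
    (hx : (ψ x.right : R) - 1 ∈ I) (hy : (ψ y.right : R) - 1 ∈ I) :
    ⁅x, y⁆ ∈ baseSubgroup ψ I := by
  rw [commutator_eq, mem_baseSubgroup]
  refine ⟨_, I.add_mem ?_ (I.mul_mem_right _ hx), rfl⟩
  rw [← neg_sub, neg_mul]
  exact I.neg_mem (I.mul_mem_right _ hy)

theorem commutator_le_baseSubgroup {I : Ideal R} (hI : ∀ b, (ψ b : R) - 1 ∈ I) :
    commutator (RingSemidirect R ψ) ≤ baseSubgroup ψ I := by
  rw [commutator_def, Subgroup.commutator_le]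
  exact fun x _ y _ => commutator_mem_baseSubgroup (hI _) (hI _)

theorem sub_one_mem_span_of_closure_range_eq_top {ι : Type*} {e : ι → B}
    (he : Subgroup.closure (Set.range e) = ⊤) (b : B) :
    (ψ b : R) - 1 ∈ Ideal.span (Set.range fun i => (ψ (e i) : R) - 1) := by
  have hb : b ∈ Subgroup.closure (Set.range e) := he ▸ Subgroup.mem_top b
  induction hb using Subgroup.closure_induction with
  | mem _ hs =>
    obtain ⟨i, rfl⟩ := hs
    exact Ideal.subset_span ⟨i, rfl⟩
  | one => simp
  | mul a c _ _ ha hc =>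
    have : (ψ (a * c) : R) - 1 = ψ a * (ψ c - 1) + (ψ a - 1) := by
      rw [map_mul, Units.val_mul]; ring
    rw [this]
    exact Ideal.add_mem _ (Ideal.mul_mem_left _ _ hc) ha
  | inv a _ ha =>
    have : (ψ a⁻¹ : R) - 1 = -ψ a⁻¹ * (ψ a - 1) := by
      rw [neg_mul, mul_sub, ← Units.val_mul, ← map_mul]; simp
    rw [this]
    exact Ideal.mul_mem_left _ _ ha

variable (ψ)

theorem mk_sum_range_two_mul (c : ℕ → R) (e : ℕ → B) (n : ℕ) :
    mk ψ (∑ k ∈ Finset.range (2 * n), c k * (ψ (e k) - 1)) 1 =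
      (List.ofFn fun j : Fin n =>
        ⁅mk ψ (-c (2 * j + 1)) (e (2 * j)), mk ψ (c (2 * j)) (e (2 * j + 1))⁆).prod := by
  induction n with
  | zero => rfl
  | succ n ih =>
    rw [List.ofFn_succ', List.prod_concat]
    simp only [Fin.val_castSucc, Fin.val_last]
    rw [← ih, commutator_mk, Nat.mul_succ, Finset.sum_range_succ, Finset.sum_range_succ,
      add_assoc, mk_add]
    congr 2
    ring

theorem mk_sum_mem_commutator {ι : Type*} (s : Finset ι) (e : ι → B) :
    mk ψ (∑ i ∈ s, ((ψ (e i) : R) - 1)) 1 ∈ commutator (RingSemidirect R ψ) := by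
  have hmem (i : ι) : Multiplicative.ofAdd ((ψ (e i) : R) - 1) ∈
      (commutator (RingSemidirect R ψ)).comap SemidirectProduct.inl := by
    have : ⁅mk ψ 0 (e i), mk ψ 1 1⁆ = mk ψ (ψ (e i) - 1) 1 := by
      rw [commutator_mk, mul_zero, zero_add, mul_one]
    change mk ψ _ 1 ∈ commutator (RingSemidirect R ψ)
    rw [← this]
    exact Subgroup.commutator_mem_commutator (Subgroup.mem_top _) (Subgroup.mem_top _)
  have := Subgroup.prod_mem _ fun i (_ : i ∈ s) => hmem i
  rwa [← ofAdd_sum] at this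

theorem exists_prod_commutators_of_mem_commutator {d : ℕ} {e : Fin d → B}
    (he : Subgroup.closure (Set.range e) = ⊤) {x : RingSemidirect R ψ}
    (hx : x ∈ commutator (RingSemidirect R ψ)) :
    ∃ g h : Fin ((d + 1) / 2) → RingSemidirect R ψ,
      x = (List.ofFn fun i => ⁅g i, h i⁆).prod := by
  have hle := commutator_le_baseSubgroup (sub_one_mem_span_of_closure_range_eq_top (ψ := ψ) he)
  obtain ⟨f, hf, rfl⟩ := mem_baseSubgroup.mp (hle hx)
  obtain ⟨c, rfl⟩ := Ideal.mem_span_range_iff_exists_fun.mp hf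
  let c' (k : ℕ) : R := if h : k < d then c ⟨k, h⟩ else 0
  let e' (k : ℕ) : B := if h : k < d then e ⟨k, h⟩ else 1
  refine ⟨_, _, Eq.trans ?_ (mk_sum_range_two_mul ψ c' e' ((d + 1) / 2))⟩
  have hpad : ∀ k ∈ Finset.range (2 * ((d + 1) / 2)), k ∉ Finset.range d →
      c' k * (ψ (e' k) - 1) = 0 := by
    intro k _ hk
    simp [e', show ¬k < d by simpa using hk]
  rw [← Finset.sum_subset (Finset.range_subset_range.mpr (by omega)) hpad, Finset.sum_range]
  simp [c', e']

end RingSemidirect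

theorem MonoidAlgebra.eq_one_of_sum_of_sub_one_eq_zero {C : Type*} [Monoid C] {ι : Type*}
    [Fintype ι] {c : ι → C} (h : ∑ i, (of ℤ C (c i) - 1) = 0) (i : ι) : c i = 1 := by
  classical
  have hcoeff : ∑ j, ((if c j = 1 then 1 else 0) - 1 : ℤ) = 0 := by
    simpa [coeff_sum, Finsupp.finsetSum_apply, of_apply, Finsupp.single_apply] using
      congr(($h).coeff 1)
  have hnonpos (j : ι) (_ : j ∈ Finset.univ) : ((if c j = 1 then 1 else 0) - 1 : ℤ) ≤ 0 := by
    split_ifs <;> simp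
  simpa [sub_eq_zero] using
    (Finset.sum_eq_zero_iff_of_nonpos hnonpos).mp hcoeff i (Finset.mem_univ i)

theorem ZWreath.mem_of_mk_sum_eq_prod_commutators {B : Type*} [CommGroup B] {ι : Type*}
    [Fintype ι] {e : ι → B} {m : ℕ} {g h : Fin m → ZWreath B} {K : Subgroup B}
    (hg : ∀ j, (g j).right ∈ K) (hh : ∀ j, (h j).right ∈ K)
    (heq : mk (∑ i, (of ℤ B (e i) - 1)) 1 = (List.ofFn fun j => ⁅g j, h j⁆).prod) (i : ι) :
    e i ∈ K := by
  let π := mapDomainRingHom ℤ (QuotientGroup.mk' K)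
  have hπ (b : B) : π (of ℤ B b) = of ℤ (B ⧸ K) b := by simp [π, of_apply]
  have hker {b : B} (hb : b ∈ K) : (zUnits B b : MonoidAlgebra ℤ B) - 1 ∈ RingHom.ker π := by
    rw [RingHom.mem_ker, map_sub, map_one, MonoidHom.coe_toHomUnits, hπ,
      (QuotientGroup.eq_one_iff b).mpr hb, map_one, sub_self]
  have hprod : (List.ofFn fun j => ⁅g j, h j⁆).prod ∈
      RingSemidirect.baseSubgroup _ (RingHom.ker π) :=
    Subgroup.list_prod_mem _ <| List.forall_mem_ofFn_iff.mpr fun j =>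
      RingSemidirect.commutator_mem_baseSubgroup (hker (hg j)) (hker (hh j))
  obtain ⟨f, hf, hfeq⟩ := RingSemidirect.mem_baseSubgroup.mp (heq ▸ hprod)
  have : f = ∑ i, (of ℤ B (e i) - 1) := congr(($hfeq).left.toAdd)
  rw [this, RingHom.mem_ker, map_sum] at hf
  simp only [map_sub, map_one, hπ] at hf
  exact (QuotientGroup.eq_one_iff _).mp (MonoidAlgebra.eq_one_of_sum_of_sub_one_eq_zero hf i)

theorem Subgroup.closure_range_eq_top_iff_span_eq_top {A : Type*} [AddCommGroup A] {κ : Type*}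
    (a : κ → Multiplicative A) :
    closure (Set.range a) = ⊤ ↔ Submodule.span ℤ (Set.range fun k => (a k).toAdd) = ⊤ := by
  rw [← toAddSubgroup'.injective.eq_iff, toAddSubgroup'_closure, map_top,
    ← Submodule.toAddSubgroup_injective.eq_iff, Submodule.span_int_eq_addSubgroupClosure,
    Submodule.top_toAddSubgroup]
  rfl

theorem closure_range_ofAdd_single_eq_top {ι : Type*} [Finite ι] [DecidableEq ι] :
    Subgroup.closure (Set.range fun i : ι => Multiplicative.ofAdd (Pi.single i (1 : ℤ))) = ⊤ :=
  (Subgroup.closure_range_eq_top_iff_span_eq_top _).mpr <| by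
    convert (Pi.basisFun ℤ ι).span_eq using 2
    · rfl
    · exact Subsingleton.elim _ _ -- `Module ℤ` structures are unique
    · ext; simp

theorem card_le_of_closure_range_eq_top {ι κ : Type*} [Fintype ι] [Fintype κ]
    {a : κ → Multiplicative (ι → ℤ)} (ha : Subgroup.closure (Set.range a) = ⊤) :
    Fintype.card ι ≤ Fintype.card κ := by
  have := finrank_range_le_card (R := ℤ) fun k => (a k).toAdd
  rwa [Set.finrank, (Subgroup.closure_range_eq_top_iff_span_eq_top a).mp ha, finrank_top,
    Module.finrank_fintype_fun_eq_card] at this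

theorem commutatorWidth_wreath_general (d : ℕ) :
    (∀ x ∈ commutator (ZWreath (Multiplicative (Fin d → ℤ))),
      ∃ g h : Fin ((d + 1) / 2) → ZWreath (Multiplicative (Fin d → ℤ)),
        x = (List.ofFn fun i => ⁅g i, h i⁆).prod) ∧
    (∃ x ∈ commutator (ZWreath (Multiplicative (Fin d → ℤ))),
      ∀ m < (d + 1) / 2,
        ¬ ∃ g h : Fin m → ZWreath (Multiplicative (Fin d → ℤ)),
          x = (List.ofFn fun i => ⁅g i, h i⁆).prod) := by
  set e : Fin d → Multiplicative (Fin d → ℤ) := fun i => .ofAdd (Pi.single i 1)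
  have he : Subgroup.closure (Set.range e) = ⊤ := closure_range_ofAdd_single_eq_top
  refine ⟨fun x hx => RingSemidirect.exists_prod_commutators_of_mem_commutator _ he hx,
    ZWreath.mk (∑ i, (of ℤ _ (e i) - 1)) 1, RingSemidirect.mk_sum_mem_commutator _ _ e, ?_⟩
  rintro m hm ⟨g, h, heq⟩
  let a : Fin m ⊕ Fin m → Multiplicative (Fin d → ℤ) :=
    Sum.elim (fun j => (g j).right) (fun j => (h j).right)
  have hmem := ZWreath.mem_of_mk_sum_eq_prod_commutators (K := Subgroup.closure (Set.range a))
    (fun j => Subgroup.subset_closure ⟨.inl j, rfl⟩)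
    (fun j => Subgroup.subset_closure ⟨.inr j, rfl⟩) heq
  have htop : Subgroup.closure (Set.range a) = ⊤ :=
    eq_top_iff.mpr (he ▸ (Subgroup.closure_le _).mpr (Set.range_subset_iff.mpr hmem))
  have hcard := card_le_of_closure_range_eq_top htop
  simp only [Fintype.card_fin, Fintype.card_sum] at hcard
  omega

/-- The commutator width of `ℤ ≀ ℤ^d` is exactly `⌈d/2⌉`: every element of the derived
subgroup is a product of `⌈d/2⌉` commutators, and some element of the derived subgroup is
not a product of fewer commutators. -/
theorem commutatorWidth_wreath (d : ℕ) (hd : 1 ≤ d) :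
    (∀ x ∈ commutator (ZWreath (Multiplicative (Fin d → ℤ))),
      ∃ g h : Fin ((d + 1) / 2) → ZWreath (Multiplicative (Fin d → ℤ)),
        x = (List.ofFn fun i => ⁅g i, h i⁆).prod) ∧
    (∃ x ∈ commutator (ZWreath (Multiplicative (Fin d → ℤ))),
      ∀ m < (d + 1) / 2,
        ¬ ∃ g h : Fin m → ZWreath (Multiplicative (Fin d → ℤ)),
          x = (List.ofFn fun i => ⁅g i, h i⁆).prod) :=
  commutatorWidth_wreath_general d
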